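/- ∫_{ℝ³} (x₁² + x₂²) / (‖x‖³ · ‖x − e₃‖³) dx = 4π, where e₃ = (0,0,1) and x₁, x₂ denote the first two coordinates of x. Consequently the interaction energy (1/(32π²)) ∫_{ℝ³} ⟨e₃ × x, e₃ × (x − e₃)⟩ / (‖x‖³‖x − e₃‖³) dx of two unit vortices at 0 and e₃, both with vorticity e₃, equals 1/(8π). -/

import Mathlib

/-!
Write `x = (y, z)` with `y ∈ ℝ²`, `z ∈ ℝ` and integrate over `y` first. For `z ∉ {0, 1}` the
inner integrand is radial in `y`, and in polar coordinates it becomes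
`2π ∫₀^∞ r³ / ((r² + z²)^{3/2} (r² + (z - 1)²)^{3/2}) dr = 2π / (|z| + |z - 1|)²`, with primitive
`-(r² + uv) / (uv (u + v)²)` where `u = √(r² + z²)`, `v = √(r² + (z - 1)²)`.
Since `|z| + |z - 1| = max 1 |2z - 1|`, the outer integral is `π ∫ dt / max(1, |t|)² = 4π`.
The interaction energy follows from `⟨e₃ × x, e₃ × (x - e₃)⟩ = x₁² + x₂²`.
-/

open MeasureTheory Real
open scoped RealInnerProductSpace

noncomputable section

/-- The cross product on `EuclideanSpace ℝ (Fin 3)`. -/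
def cross (u v : EuclideanSpace ℝ (Fin 3)) : EuclideanSpace ℝ (Fin 3) :=
  (WithLp.equiv 2 (Fin 3 → ℝ)).symm
    ![u 1 * v 2 - u 2 * v 1, u 2 * v 0 - u 0 * v 2, u 0 * v 1 - u 1 * v 0]

/-- The third standard basis vector `e₃ = (0,0,1)`. -/
def e3 : EuclideanSpace ℝ (Fin 3) := (WithLp.equiv 2 (Fin 3 → ℝ)).symm ![0, 0, 1]

open Set Filter Topology

namespace EuclideanSpace

def snocMeasurableEquiv (n : ℕ) :
    ℝ × EuclideanSpace ℝ (Fin n) ≃ᵐ EuclideanSpace ℝ (Fin (n + 1)) :=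
  ((MeasurableEquiv.refl ℝ).prodCongr (MeasurableEquiv.toLp 2 (Fin n → ℝ)).symm).trans
    ((MeasurableEquiv.piFinSuccAbove (fun _ => ℝ) (Fin.last n)).symm.trans
      (MeasurableEquiv.toLp 2 (Fin (n + 1) → ℝ)))

variable {n : ℕ}

lemma snocMeasurableEquiv_apply (p : ℝ × EuclideanSpace ℝ (Fin n)) (i : Fin (n + 1)) :
    snocMeasurableEquiv n p i = Fin.snoc (α := fun _ => ℝ) p.2 p.1 i := by
  simp only [snocMeasurableEquiv, MeasurableEquiv.trans_apply,
    MeasurableEquiv.piFinSuccAbove_symm_apply, Fin.insertNthEquiv_last, MeasurableEquiv.toLp_apply,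
    Fin.snocEquiv_apply]
  rfl

lemma measurePreserving_snocMeasurableEquiv : MeasurePreserving (snocMeasurableEquiv n) := by
  refine (PiLp.volume_preserving_toLp _).comp ((volume_preserving_piFinSuccAbove _ _).symm.comp ?_)
  have := (MeasurePreserving.id (volume : Measure ℝ)).prod (PiLp.volume_preserving_ofLp (Fin n))
  rwa [← Measure.volume_eq_prod, ← Measure.volume_eq_prod] at this

lemma norm_snocMeasurableEquiv (p : ℝ × EuclideanSpace ℝ (Fin n)) :
    ‖snocMeasurableEquiv n p‖ = √(‖p.2‖ ^ 2 + p.1 ^ 2) := by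
  rw [EuclideanSpace.norm_eq, EuclideanSpace.norm_sq_eq, Fin.sum_univ_castSucc]
  simp [snocMeasurableEquiv_apply]

lemma snocMeasurableEquiv_sub (p q : ℝ × EuclideanSpace ℝ (Fin n)) :
    snocMeasurableEquiv n p - snocMeasurableEquiv n q = snocMeasurableEquiv n (p - q) := by
  ext i
  refine Fin.lastCases ?_ (fun j => ?_) i <;> simp [snocMeasurableEquiv_apply]

lemma snocMeasurableEquiv_two_sq_add_sq (p : ℝ × EuclideanSpace ℝ (Fin 2)) :
    snocMeasurableEquiv 2 p 0 ^ 2 + snocMeasurableEquiv 2 p 1 ^ 2 = ‖p.2‖ ^ 2 := by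
  simp only [snocMeasurableEquiv_apply, Fin.snoc_apply_zero, norm_sq_eq, Real.norm_eq_abs, sq_abs,
    Fin.sum_univ_two, add_right_inj]
  rfl

end EuclideanSpace

open EuclideanSpace

lemma e3_eq_snocMeasurableEquiv : e3 = snocMeasurableEquiv 2 (1, 0) := by
  ext i
  fin_cases i <;> simp [e3, snocMeasurableEquiv_apply] <;> rfl

lemma inner_cross_e3_cross_e3_sub (x : EuclideanSpace ℝ (Fin 3)) :
    ⟪cross e3 x, cross e3 (x - e3)⟫ = x 0 ^ 2 + x 1 ^ 2 := by
  rw [PiLp.inner_apply, Fin.sum_univ_three]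
  simp only [cross, e3, WithLp.equiv_symm_apply, PiLp.sub_apply, Matrix.cons_val_zero,
    Matrix.cons_val_one, Matrix.cons_val_two, Matrix.tail_cons, Matrix.head_cons,
    RCLike.inner_apply, conj_trivial]
  ring

lemma hasDerivAt_sqrt_sq_add {a r : ℝ} (h : r ^ 2 + a ^ 2 ≠ 0) :
    HasDerivAt (fun r => √(r ^ 2 + a ^ 2)) (r / √(r ^ 2 + a ^ 2)) r := by
  convert ((hasDerivAt_pow 2 r).add_const (a ^ 2)).sqrt h using 1
  ring

def radialPrimitive (a b r : ℝ) : ℝ :=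
  -(r ^ 2 + √(r ^ 2 + a ^ 2) * √(r ^ 2 + b ^ 2)) /
    (√(r ^ 2 + a ^ 2) * √(r ^ 2 + b ^ 2) * (√(r ^ 2 + a ^ 2) + √(r ^ 2 + b ^ 2)) ^ 2)

lemma hasDerivAt_radialPrimitive {a b : ℝ} (ha : a ≠ 0) (hb : b ≠ 0) (r : ℝ) :
    HasDerivAt (radialPrimitive a b)
      (r ^ 3 / (√(r ^ 2 + a ^ 2) ^ 3 * √(r ^ 2 + b ^ 2) ^ 3)) r := by
  have hu : 0 < √(r ^ 2 + a ^ 2) := Real.sqrt_pos.2 (by positivity)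
  have hv : 0 < √(r ^ 2 + b ^ 2) := Real.sqrt_pos.2 (by positivity)
  have du := hasDerivAt_sqrt_sq_add (a := a) (r := r) (by positivity)
  have dv := hasDerivAt_sqrt_sq_add (a := b) (r := r) (by positivity)
  refine ((((hasDerivAt_pow 2 r).fun_add (du.fun_mul dv)).fun_neg).fun_div
    ((du.fun_mul dv).fun_mul ((du.fun_add dv).fun_pow 2)) (by positivity)).congr_deriv ?_
  generalize √(r ^ 2 + a ^ 2) = u at hu ⊢
  generalize √(r ^ 2 + b ^ 2) = v at hv ⊢
  field_simp
  ring

lemma radialPrimitive_zero {a b : ℝ} (ha : a ≠ 0) (hb : b ≠ 0) :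
    radialPrimitive a b 0 = -1 / (|a| + |b|) ^ 2 := by
  have hab : 0 < |a| * |b| := by positivity
  simp only [radialPrimitive, zero_pow two_ne_zero, zero_add, Real.sqrt_sq_eq_abs]
  field_simp

lemma tendsto_radialPrimitive_atTop (a b : ℝ) :
    Tendsto (radialPrimitive a b) atTop (𝓝 0) := by
  have lower : Tendsto (fun r : ℝ => -1 / r ^ 2) atTop (𝓝 0) :=
    tendsto_const_nhds.div_atTop (tendsto_pow_atTop two_ne_zero)
  refine tendsto_of_tendsto_of_tendsto_of_le_of_le' lower tendsto_const_nhds ?_ ?_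
  all_goals filter_upwards [eventually_gt_atTop 0] with r hr
  all_goals
    have hu : r ≤ √(r ^ 2 + a ^ 2) := Real.le_sqrt_of_sq_le (by nlinarith)
    have hv : r ≤ √(r ^ 2 + b ^ 2) := Real.le_sqrt_of_sq_le (by nlinarith)
    simp only [radialPrimitive]
    generalize √(r ^ 2 + a ^ 2) = u at hu ⊢
    generalize √(r ^ 2 + b ^ 2) = v at hv ⊢
    have hu0 := hr.trans_le hu
    have hv0 := hr.trans_le hv
  · rw [div_le_div_iff₀ (by positivity) (by positivity)]
    have h1 : r ^ 2 ≤ u * v := by nlinarith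
    have h2 : r ^ 2 ≤ u ^ 2 := pow_le_pow_left₀ hr.le hu 2
    nlinarith [mul_le_mul h1 h1 (by positivity) (by positivity),
      mul_le_mul_of_nonneg_left h2 (by positivity : (0:ℝ) ≤ u * v),
      (by positivity : (0:ℝ) ≤ u * v * (u * v + v ^ 2))]
  · exact div_nonpos_of_nonpos_of_nonneg (by nlinarith [mul_pos hu0 hv0]) (by positivity)

lemma integrableOn_Ioi_cube_div_sqrt_cube {a b : ℝ} (ha : a ≠ 0) (hb : b ≠ 0) :
    IntegrableOn (fun r => r ^ 3 / (√(r ^ 2 + a ^ 2) ^ 3 * √(r ^ 2 + b ^ 2) ^ 3)) (Ioi 0) :=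
  integrableOn_Ioi_deriv_of_nonneg' (fun r _ => hasDerivAt_radialPrimitive ha hb r)
    (fun r (hr : 0 < r) => by positivity) (tendsto_radialPrimitive_atTop a b)

lemma integral_Ioi_cube_div_sqrt_cube {a b : ℝ} (ha : a ≠ 0) (hb : b ≠ 0) :
    ∫ r in Ioi 0, r ^ 3 / (√(r ^ 2 + a ^ 2) ^ 3 * √(r ^ 2 + b ^ 2) ^ 3) =
      1 / (|a| + |b|) ^ 2 := by
  rw [integral_Ioi_of_hasDerivAt_of_nonneg' (fun r _ => hasDerivAt_radialPrimitive ha hb r)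
    (fun r (hr : 0 < r) => by positivity) (tendsto_radialPrimitive_atTop a b),
    radialPrimitive_zero ha hb]
  ring

lemma integrable_sq_norm_div_sqrt_cube_fin_two {a b : ℝ} (ha : a ≠ 0) (hb : b ≠ 0) :
    Integrable fun y : EuclideanSpace ℝ (Fin 2) =>
      ‖y‖ ^ 2 / (√(‖y‖ ^ 2 + a ^ 2) ^ 3 * √(‖y‖ ^ 2 + b ^ 2) ^ 3) := by
  refine (integrable_fun_norm_addHaar volume
    (f := fun s => s ^ 2 / (√(s ^ 2 + a ^ 2) ^ 3 * √(s ^ 2 + b ^ 2) ^ 3))).2 ?_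
  simp only [finrank_euclideanSpace_fin, smul_eq_mul]
  refine (integrableOn_Ioi_cube_div_sqrt_cube ha hb).congr_fun (fun r _ => ?_) measurableSet_Ioi
  ring

lemma integral_sq_norm_div_sqrt_cube_fin_two {a b : ℝ} (ha : a ≠ 0) (hb : b ≠ 0) :
    ∫ y : EuclideanSpace ℝ (Fin 2),
      ‖y‖ ^ 2 / (√(‖y‖ ^ 2 + a ^ 2) ^ 3 * √(‖y‖ ^ 2 + b ^ 2) ^ 3) = 2 * π / (|a| + |b|) ^ 2 := by
  rw [integral_fun_norm_addHaar volume
    (fun s => s ^ 2 / (√(s ^ 2 + a ^ 2) ^ 3 * √(s ^ 2 + b ^ 2) ^ 3))]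
  simp only [finrank_euclideanSpace_fin, smul_eq_mul, Measure.real,
    EuclideanSpace.volume_ball_fin_two]
  norm_num [← mul_div_assoc, ← pow_succ', integral_Ioi_cube_div_sqrt_cube ha hb, pi_nonneg]
  ring

lemma integrableOn_Ioi_inv_max_one_sq : IntegrableOn (fun t : ℝ => (max 1 t ^ 2)⁻¹) (Ioi 0) := by
  rw [← Ioc_union_Ioi_eq_Ioi zero_le_one]
  refine IntegrableOn.union ?_ ?_
  · exact (integrableOn_const (C := (1 : ℝ)) (by simp)).congr_fun
      (fun t ht => by simp [max_eq_left ht.2]) measurableSet_Ioc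
  · exact (integrableOn_Ioi_rpow_of_lt (by norm_num : (-2 : ℝ) < -1) zero_lt_one).congr_fun
      (fun t (ht : 1 < t) => by simp [max_eq_right ht.le, rpow_neg_ofNat]) measurableSet_Ioi

lemma integral_Ioi_inv_max_one_sq : ∫ t in Ioi (0 : ℝ), (max 1 t ^ 2)⁻¹ = 2 := by
  rw [← Ioc_union_Ioi_eq_Ioi zero_le_one, setIntegral_union Ioc_disjoint_Ioi_same measurableSet_Ioi
    (integrableOn_Ioi_inv_max_one_sq.mono_set Ioc_subset_Ioi_self)
    (integrableOn_Ioi_inv_max_one_sq.mono_set (Ioi_subset_Ioi zero_le_one)),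
    setIntegral_congr_fun measurableSet_Ioc (g := fun _ => 1)
      (fun t ht => by simp [max_eq_left ht.2]),
    setIntegral_congr_fun measurableSet_Ioi (g := fun t => t ^ (-2 : ℝ))
      (fun t (ht : 1 < t) => by simp [max_eq_right ht.le, rpow_neg_ofNat]),
    integral_Ioi_rpow_of_lt (by norm_num) zero_lt_one]
  norm_num

lemma integrable_inv_max_one_abs_sq : Integrable fun t : ℝ => (max 1 |t| ^ 2)⁻¹ := by
  simpa using (integrable_fun_norm_addHaar (volume : Measure ℝ)
    (f := fun t : ℝ => (max 1 t ^ 2)⁻¹)).2 (by simpa using integrableOn_Ioi_inv_max_one_sq)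

lemma integral_inv_max_one_abs_sq : ∫ t : ℝ, (max 1 |t| ^ 2)⁻¹ = 4 := by
  rw [integral_comp_abs (f := fun t => (max 1 t ^ 2)⁻¹), integral_Ioi_inv_max_one_sq]
  norm_num

lemma abs_add_abs_sub_one_eq_max (z : ℝ) : |z| + |z - 1| = max 1 |2 * z - 1| := by
  rcases le_total z 0 with h | h
  · rw [abs_of_nonpos h, abs_of_nonpos (by linarith), abs_of_nonpos (by linarith),
      max_eq_right (by linarith)]
    ring
  rcases le_total z 1 with h' | h'
  · rw [abs_of_nonneg h, abs_of_nonpos (by linarith),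
      max_eq_left (abs_le.2 ⟨by linarith, by linarith⟩)]
    ring
  · rw [abs_of_nonneg h, abs_of_nonneg (by linarith), abs_of_nonneg (by linarith),
      max_eq_right (by linarith)]
    ring

lemma integrable_inv_abs_add_abs_sub_one_sq :
    Integrable fun z : ℝ => ((|z| + |z - 1|) ^ 2)⁻¹ := by
  simp_rw [abs_add_abs_sub_one_eq_max, sub_eq_add_neg]
  exact (integrable_inv_max_one_abs_sq.comp_add_right (-1)).comp_mul_left' two_ne_zero

lemma integral_inv_abs_add_abs_sub_one_sq : ∫ z : ℝ, ((|z| + |z - 1|) ^ 2)⁻¹ = 2 := by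
  simp_rw [abs_add_abs_sub_one_eq_max, sub_eq_add_neg]
  rw [Measure.integral_comp_mul_left (fun t => (max 1 |t + -1| ^ 2)⁻¹),
    integral_add_right_eq_self (fun t => (max 1 |t| ^ 2)⁻¹), integral_inv_max_one_abs_sq]
  norm_num

lemma ae_ne_zero_and_ne_one : ∀ᵐ z : ℝ, z ≠ 0 ∧ z ≠ 1 := by
  have h : ∀ c : ℝ, ∀ᵐ z : ℝ, z ≠ c := fun c => by simp [ae_iff, measure_singleton]
  exact (h 0).and (h 1)

lemma ae_integral_slice_eq :
    (fun z : ℝ => ∫ y : EuclideanSpace ℝ (Fin 2),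
      ‖y‖ ^ 2 / (√(‖y‖ ^ 2 + z ^ 2) ^ 3 * √(‖y‖ ^ 2 + (z - 1) ^ 2) ^ 3)) =ᵐ[volume]
      fun z => 2 * π / (|z| + |z - 1|) ^ 2 := by
  filter_upwards [ae_ne_zero_and_ne_one] with z ⟨h0, h1⟩
  exact integral_sq_norm_div_sqrt_cube_fin_two h0 (sub_ne_zero.2 h1)

lemma integrable_cylindrical_integrand :
    Integrable (fun p : ℝ × EuclideanSpace ℝ (Fin 2) =>
      ‖p.2‖ ^ 2 / (√(‖p.2‖ ^ 2 + p.1 ^ 2) ^ 3 * √(‖p.2‖ ^ 2 + (p.1 - 1) ^ 2) ^ 3))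
      (volume.prod volume) := by
  rw [integrable_prod_iff (Measurable.aestronglyMeasurable (by fun_prop))]
  refine ⟨?_, ?_⟩
  · filter_upwards [ae_ne_zero_and_ne_one] with z ⟨h0, h1⟩
    exact integrable_sq_norm_div_sqrt_cube_fin_two h0 (sub_ne_zero.2 h1)
  · refine (integrable_inv_abs_add_abs_sub_one_sq.const_mul (2 * π)).congr ?_
    filter_upwards [ae_integral_slice_eq] with z hz
    simp only [norm_div, norm_mul, norm_pow, norm_norm, Real.norm_of_nonneg (Real.sqrt_nonneg _)]
    rw [hz, div_eq_mul_inv]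

lemma integral_sq_add_sq_div_norm_cube_mul_norm_sub_e3_cube :
    ∫ x : EuclideanSpace ℝ (Fin 3), (x 0 ^ 2 + x 1 ^ 2) / (‖x‖ ^ 3 * ‖x - e3‖ ^ 3) = 4 * π := by
  rw [← measurePreserving_snocMeasurableEquiv.integral_comp
    (snocMeasurableEquiv 2).measurableEmbedding]
  simp_rw [snocMeasurableEquiv_two_sq_add_sq, e3_eq_snocMeasurableEquiv, snocMeasurableEquiv_sub,
    norm_snocMeasurableEquiv, Prod.fst_sub, Prod.snd_sub, sub_zero]
  rw [Measure.volume_eq_prod, integral_prod _ integrable_cylindrical_integrand,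
    integral_congr_ae ae_integral_slice_eq]
  simp_rw [div_eq_mul_inv]
  rw [integral_const_mul, integral_inv_abs_add_abs_sub_one_sq]
  ring

/-- `∫_{ℝ³} (x₁² + x₂²)/(‖x‖³‖x−e₃‖³) dx = 4π`, and consequently the interaction energy
of two unit vortices at `0` and `e₃`, both with vorticity `e₃`, equals `1/(8π)`. -/
theorem integral_radial_and_axial_interaction_energy :
    (∫ x : EuclideanSpace ℝ (Fin 3),
        ((x 0) ^ 2 + (x 1) ^ 2) / (‖x‖ ^ 3 * ‖x - e3‖ ^ 3) = 4 * π) ∧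
    (1 / (32 * π ^ 2)) *
        ∫ x : EuclideanSpace ℝ (Fin 3),
          ⟪cross e3 x, cross e3 (x - e3)⟫ / (‖x‖ ^ 3 * ‖x - e3‖ ^ 3) = 1 / (8 * π) := by
  refine ⟨integral_sq_add_sq_div_norm_cube_mul_norm_sub_e3_cube, ?_⟩
  simp_rw [inner_cross_e3_cross_e3_sub, integral_sq_add_sq_div_norm_cube_mul_norm_sub_e3_cube]
  field_simp
  ring
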